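/- arXiv:2305.10402 — 2 statements merged into one kernel-verified Lean document; each statement's English description precedes it below -/
import Mathlib

section
/- For every integer T ≥ 5 and every real γ with 0 < γ < π/(6T+2), one has v_T·sin((2T+1)γ) − (3T+1)·sin(γ) − sin((3T+1)γ) < 0, where v_T = (T+1)·sin(2π/(3T+2))/sin(Tπ/(3T+2)). -/
/-!
Upper-bound `v_T` by `6.2832 (T + 1) / (0.866 (3T + 2) - 1.16)`: use `sin x ≤ x` in the numerator
and, writing `Tπ/(3T+2) = π/3 - b`, `sin (π/3 - b) ≥ (√3/2)(1 - b²/2) - b/2` in the denominator.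
The Taylor bounds `x - x³/6 ≤ sin x ≤ x - x³/6 + x⁵/120` then reduce the claim to
`γ (A + B u + C u²) < 0` with `u = ((3T+1)γ)² < (π/2)²` and `B, C ≥ 0`, so it suffices that
`A + B (π/2)² + C (π/2)⁴ < 0`: a polynomial inequality in `T` all of whose coefficients in `T - 5`
have the same sign.
-/

open Real

lemma le_of_hasDerivAt_le_of_nonneg {f g f' g' : ℝ → ℝ} (hf : ∀ x, HasDerivAt f (f' x) x)
    (hg : ∀ x, HasDerivAt g (g' x) x) (h₀ : f 0 ≤ g 0) (hd : ∀ x, 0 < x → f' x ≤ g' x)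
    {x : ℝ} (hx : 0 ≤ x) : f x ≤ g x := by
  have hmono : MonotoneOn (g - f) (Set.Ici 0) :=
    monotoneOn_of_hasDerivWithinAt_nonneg (convex_Ici 0)
      (fun y _ ↦ ((hg y).sub (hf y)).continuousAt.continuousWithinAt)
      (fun y _ ↦ ((hg y).sub (hf y)).hasDerivWithinAt)
      (fun y hy ↦ sub_nonneg.2 (hd y (by simpa using hy)))
  have := hmono Set.self_mem_Ici hx hx
  simp only [Pi.sub_apply] at this
  linarith

lemma cos_le_one_sub_sq_div_two_add_pow_four {x : ℝ} (hx : 0 ≤ x) :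
    cos x ≤ 1 - x ^ 2 / 2 + x ^ 4 / 24 := by
  refine le_of_hasDerivAt_le_of_nonneg (g := fun y ↦ 1 - y ^ 2 / 2 + y ^ 4 / 24)
    (f' := fun y ↦ -sin y) (g' := fun y ↦ -y + y ^ 3 / 6) hasDerivAt_cos (fun y ↦ ?_) (by norm_num) (fun y hy ↦ ?_) hx
  · exact ((((hasDerivAt_const y 1).sub ((hasDerivAt_pow 2 y).div_const 2)).add
      ((hasDerivAt_pow 4 y).div_const 24))).congr_deriv (by ring)
  · linarith [sin_ge_sub_cube hy.le]

lemma sin_le_sub_cube_add_pow_five {x : ℝ} (hx : 0 ≤ x) :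
    sin x ≤ x - x ^ 3 / 6 + x ^ 5 / 120 := by
  refine le_of_hasDerivAt_le_of_nonneg (g := fun y ↦ y - y ^ 3 / 6 + y ^ 5 / 120)
    (f' := cos) (g' := fun y ↦ 1 - y ^ 2 / 2 + y ^ 4 / 24) hasDerivAt_sin (fun y ↦ ?_) (by norm_num) (fun y hy ↦ ?_) hx
  · exact ((((hasDerivAt_id y).sub ((hasDerivAt_pow 3 y).div_const 6)).add
      ((hasDerivAt_pow 5 y).div_const 120))).congr_deriv (by simp; ring)
  · exact cos_le_one_sub_sq_div_two_add_pow_four hy.le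

lemma le_sin_pi_div_three_sub {b : ℝ} (hb : 0 ≤ b) :
    √3 / 2 * (1 - b ^ 2 / 2) - b / 2 ≤ sin (π / 3 - b) := by
  rw [sin_sub, sin_pi_div_three, cos_pi_div_three]
  have := mul_le_mul_of_nonneg_left (one_sub_sq_div_two_le_cos (x := b))
    (by positivity : (0 : ℝ) ≤ √3 / 2)
  linarith [sin_le hb]

noncomputable def v (t : ℝ) : ℝ := (t + 1) * sin (2 * π / (3 * t + 2)) / sin (t * π / (3 * t + 2))

section
variable {t : ℝ}

lemma sin_two_pi_div_le (ht : 0 ≤ t) : sin (2 * π / (3 * t + 2)) ≤ 6.2832 / (3 * t + 2) := by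
  refine (sin_le (by positivity)).trans ?_
  gcongr
  linarith [pi_lt_d4]

lemma le_sin_mul_pi_div (ht : 5 ≤ t) :
    (0.866 * (3 * t + 2) - 1.16) / (3 * t + 2) ≤ sin (t * π / (3 * t + 2)) := by
  set b := 2 * π / (3 * (3 * t + 2)) with hb_def
  have hn : 0 < 3 * t + 2 := by linarith
  have hb : t * π / (3 * t + 2) = π / 3 - b := by rw [hb_def]; field_simp; ring
  have hbn : b * (3 * t + 2) ≤ 2.0944 := by
    rw [hb_def]; field_simp; linarith [pi_lt_d4]
  have hbu : b ≤ 0.1233 := by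
    rw [hb_def, div_le_iff₀ (by linarith)]; nlinarith [pi_lt_d4]
  have hs3 : 1.732 ≤ √3 ∧ √3 ≤ 1.7321 := by
    constructor <;> nlinarith [sq_sqrt (show (0 : ℝ) ≤ 3 by norm_num), sqrt_nonneg 3]
  have hbbn : √3 * (b * (b * (3 * t + 2))) ≤ 1.7321 * (0.1233 * 2.0944) :=
    mul_le_mul hs3.2 (mul_le_mul hbu hbn (by positivity) (by norm_num)) (by positivity)
      (by norm_num)
  rw [hb, div_le_iff₀ hn]
  refine le_trans ?_ (mul_le_mul_of_nonneg_right (le_sin_pi_div_three_sub (by positivity)) hn.le)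
  linarith [mul_nonneg (sub_nonneg.2 hs3.1) hn.le]

lemma v_le (ht : 5 ≤ t) : v t ≤ 6.2832 * (t + 1) / (0.866 * (3 * t + 2) - 1.16) := by
  have hW : 0 < 0.866 * (3 * t + 2) - 1.16 := by linarith
  unfold v
  calc (t + 1) * sin (2 * π / (3 * t + 2)) / sin (t * π / (3 * t + 2))
      ≤ (t + 1) * (6.2832 / (3 * t + 2)) / ((0.866 * (3 * t + 2) - 1.16) / (3 * t + 2)) := by
        gcongr
        exacts [sin_two_pi_div_le (by linarith), le_sin_mul_pi_div ht]
    _ = 6.2832 * (t + 1) / (0.866 * (3 * t + 2) - 1.16) := by field_simp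

lemma cubic_coeff_nonneg (ht : 5 ≤ t) :
    0 ≤ (0.866 * (3 * t + 2) - 1.16) * ((3 * t + 1) + (3 * t + 1) ^ 3) -
      6.2832 * (t + 1) * (2 * t + 1) ^ 3 := by
  obtain ⟨s, hs, rfl⟩ : ∃ s, 0 ≤ s ∧ t = 5 + s := ⟨t - 5, by linarith, by ring⟩
  ring_nf; positivity

lemma quintic_poly_neg (ht : 5 ≤ t) :
    120 * (3 * t + 1) ^ 4 * (6.2832 * (t + 1) * (2 * t + 1) -
        2 * (3 * t + 1) * (0.866 * (3 * t + 2) - 1.16)) +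
      20 * 2.4675 * (3 * t + 1) ^ 2 * ((0.866 * (3 * t + 2) - 1.16) *
        ((3 * t + 1) + (3 * t + 1) ^ 3) - 6.2832 * (t + 1) * (2 * t + 1) ^ 3) +
      2.4675 ^ 2 * (6.2832 * (t + 1) * (2 * t + 1) ^ 5) < 0 := by
  obtain ⟨s, hs, rfl⟩ : ∃ s, 0 ≤ s ∧ t = 5 + s := ⟨t - 5, by linarith, by ring⟩
  rw [← neg_pos]; ring_nf; positivity

lemma taylor_bound_combination_neg {γ : ℝ} (ht : 5 ≤ t) (hγ : 0 < γ)
    (hu : γ ^ 2 * (3 * t + 1) ^ 2 ≤ 2.4675) :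
    6.2832 * (t + 1) / (0.866 * (3 * t + 2) - 1.16) *
        ((2 * t + 1) * γ - ((2 * t + 1) * γ) ^ 3 / 6 + ((2 * t + 1) * γ) ^ 5 / 120) -
      (3 * t + 1) * (γ - γ ^ 3 / 6) - ((3 * t + 1) * γ - ((3 * t + 1) * γ) ^ 3 / 6) < 0 := by
  set u := γ ^ 2 * (3 * t + 1) ^ 2 with hu_def
  set Q := 120 * (3 * t + 1) ^ 4 * (6.2832 * (t + 1) * (2 * t + 1) -
        2 * (3 * t + 1) * (0.866 * (3 * t + 2) - 1.16)) +
      20 * u * (3 * t + 1) ^ 2 * ((0.866 * (3 * t + 2) - 1.16) *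
        ((3 * t + 1) + (3 * t + 1) ^ 3) - 6.2832 * (t + 1) * (2 * t + 1) ^ 3) +
      u ^ 2 * (6.2832 * (t + 1) * (2 * t + 1) ^ 5) with hQ_def
  have hW : 0 < 0.866 * (3 * t + 2) - 1.16 := by linarith
  have hQ : Q < 0 := by
    refine lt_of_le_of_lt ?_ (quintic_poly_neg ht)
    have := cubic_coeff_nonneg ht
    rw [hQ_def]
    gcongr
  have hE : 6.2832 * (t + 1) / (0.866 * (3 * t + 2) - 1.16) *
        ((2 * t + 1) * γ - ((2 * t + 1) * γ) ^ 3 / 6 + ((2 * t + 1) * γ) ^ 5 / 120) -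
      (3 * t + 1) * (γ - γ ^ 3 / 6) - ((3 * t + 1) * γ - ((3 * t + 1) * γ) ^ 3 / 6) =
      γ * Q / (120 * (3 * t + 1) ^ 4 * (0.866 * (3 * t + 2) - 1.16)) := by
    rw [hQ_def, hu_def]
    generalize 0.866 * (3 * t + 2) - 1.16 = W at hW ⊢
    field_simp
    ring
  rw [hE]
  exact div_neg_of_neg_of_pos (mul_neg_of_pos_of_neg hγ hQ) (by positivity)

theorem v_mul_sin_sub_sub_neg {γ : ℝ} (ht : 5 ≤ t) (h0 : 0 < γ) (h1 : γ < π / (6 * t + 2)) :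
    v t * sin ((2 * t + 1) * γ) -
      (3 * t + 1) * sin γ - sin ((3 * t + 1) * γ) < 0 := by
  have hγπ : γ * (6 * t + 2) < π := by rwa [lt_div_iff₀ (by linarith)] at h1
  have hu : γ ^ 2 * (3 * t + 1) ^ 2 ≤ 2.4675 := by
    nlinarith [pi_lt_d4, mul_pos h0 (by linarith : (0 : ℝ) < 6 * t + 2)]
  refine lt_of_le_of_lt ?_ (taylor_bound_combination_neg ht h0 hu)
  have hv := v_le ht
  have hx := sin_le_sub_cube_add_pow_five (by positivity : 0 ≤ (2 * t + 1) * γ)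
  gcongr
  · exact sin_nonneg_of_nonneg_of_le_pi (by positivity) (by nlinarith)
  · exact div_nonneg (by positivity) (by linarith)
  · exact sin_ge_sub_cube h0.le
  · exact sin_ge_sub_cube (by positivity)

end

theorem lemma_new (T : ℕ) (hT : 5 ≤ T) (γ : ℝ) (h0 : 0 < γ) (h1 : γ < π / (6 * T + 2)) :
    ((T : ℝ) + 1) * Real.sin (2 * π / (3 * T + 2)) / Real.sin (T * π / (3 * T + 2)) *
        Real.sin ((2 * T + 1) * γ) -
      (3 * T + 1) * Real.sin γ - Real.sin ((3 * T + 1) * γ) < 0 :=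
  v_mul_sin_sub_sub_neg (by exact_mod_cast hT) h0 h1
end

section
/- For integers T ≥ 3 and integers k with 0 < k < 3T+1, one has (3T+1)·sin(πk/(3T+1)) / (v_T·|sin(Tπk/(3T+1))|) ≥ (3T+1)/(3T) > 1, where v_T = (T+1)·sin(2π/(3T+2))/sin(Tπ/(3T+2)); here sin(Tπk/(3T+1)) ≠ 0 since gcd(T, 3T+1) = 1 and gcd(2T+1, 3T+1) = 1. -/
/-!
Write `N = 3T + 1` and `M = 3T + 2`. Replacing `k` by `N - k` changes neither side, so
`2k ≤ N`. For `k = 1`, the decrease of `sin x / x` on `(0, π]` gives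
`sin (Tπ/N) / sin (Tπ/M) ≤ M / N`; with `sin (2π/M) ≤ 2π/M` this yields
`v_T sin (Tπ/N) ≤ 2π(T+1)/N`, and `sin x ≥ 8x/9` on `[0, 2/3]` bounds `3T sin (π/N)`
from below.
For `2 ≤ k ≤ N/2`, bound `|sin|` by `1`: Jordan's inequality gives `v_T ≤ π(T+1)/T`, which is
below `3T sin (2π/N) ≤ 3T sin (πk/N)`. The sine in the denominator does not vanish because
`T` and `N` are coprime.
-/

open Real

theorem mul_sin_le_mul_sin {x y : ℝ} (hx : 0 < x) (hxy : x ≤ y) (hy : y ≤ π) :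
    x * sin y ≤ y * sin x := by
  have hy0 : 0 < y := hx.trans_le hxy
  have hslope := strictConcaveOn_sin_Icc.concaveOn.antitoneOn_slope_gt (x := 0)
    ⟨le_rfl, pi_pos.le⟩ ⟨⟨hx.le, hxy.trans hy⟩, hx⟩ ⟨⟨hy0.le, hy⟩, hy0⟩ hxy
  simp only [slope_def_field, sin_zero, sub_zero] at hslope
  rwa [div_le_div_iff₀ hy0 hx, mul_comm (sin y), mul_comm (sin x)] at hslope

theorem eight_ninths_mul_le_sin {x : ℝ} (hx0 : 0 ≤ x) (hx : x ≤ 2 / 3) :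
    8 / 9 * x ≤ sin x := by
  rcases hx0.eq_or_lt with rfl | hpos
  · simp
  have hcube : x ^ 3 ≤ 4 / 9 * x := by nlinarith [mul_pos hpos hpos]
  linarith [sin_gt_sub_cube hpos]

theorem sin_nat_mul_pi_mul_div_ne_zero {a n k : ℕ} (han : a.Coprime n) (hk0 : 0 < k)
    (hkn : k < n) : sin (a * π * k / n) ≠ 0 := by
  rw [Ne, sin_eq_zero_iff]
  rintro ⟨m, hm⟩
  have hn : (n : ℝ) ≠ 0 := by exact_mod_cast (hk0.trans hkn).ne'
  have hmn : (m * n : ℤ) = a * k := by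
    rw [eq_div_iff hn] at hm
    have : (m * n : ℝ) * π = a * k * π := by linear_combination hm
    exact_mod_cast mul_right_cancel₀ pi_pos.ne' this
  have hdvd : (n : ℤ) ∣ k :=
    (Nat.isCoprime_iff_coprime.mpr han.symm).dvd_of_dvd_mul_left ⟨m, by rw [← hmn]; ring⟩
  have := Int.le_of_dvd (by exact_mod_cast hk0) hdvd
  omega

theorem abs_sin_nat_mul_pi_sub (n : ℕ) (x : ℝ) : |sin (n * π - x)| = |sin x| := by
  simp [sin_nat_mul_pi_sub, abs_mul]

noncomputable def vCoeff (t : ℝ) : ℝ :=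
  (t + 1) * sin (2 * π / (3 * t + 2)) / sin (t * π / (3 * t + 2))

section vCoeff

variable {t : ℝ}

theorem two_mul_div_le_sin_mul_pi_div (ht : 0 ≤ t) :
    2 * t / (3 * t + 2) ≤ sin (t * π / (3 * t + 2)) := by
  have hM : 0 < 3 * t + 2 := by linarith
  have hle : t * π / (3 * t + 2) ≤ π / 2 := by
    rw [div_le_div_iff₀ hM two_pos]; nlinarith [pi_pos]
  convert mul_le_sin (by positivity) hle using 1
  field_simp

theorem vCoeff_pos (ht : 0 < t) : 0 < vCoeff t := by
  have hM : 0 < 3 * t + 2 := by linarith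
  refine div_pos (mul_pos (by linarith) (sin_pos_of_pos_of_lt_pi (by positivity) ?_)) ?_
  · rw [div_lt_iff₀ hM]; nlinarith [pi_pos]
  · exact (div_pos (by positivity) hM).trans_le (two_mul_div_le_sin_mul_pi_div ht.le)

theorem vCoeff_le_pi_mul (ht : 0 < t) : vCoeff t ≤ π * (t + 1) / t := by
  have hM : 0 < 3 * t + 2 := by linarith
  calc vCoeff t ≤ (t + 1) * (2 * π / (3 * t + 2)) / (2 * t / (3 * t + 2)) := by
        refine div_le_div₀ (by positivity) ?_ (by positivity)
          (two_mul_div_le_sin_mul_pi_div ht.le)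
        exact mul_le_mul_of_nonneg_left (sin_le (by positivity)) (by linarith)
    _ = π * (t + 1) / t := by field_simp

theorem vCoeff_mul_sin_le_two_pi_mul (ht : 0 < t) :
    vCoeff t * sin (t * π / (3 * t + 1)) ≤ 2 * π * (t + 1) / (3 * t + 1) := by
  have hN : 0 < 3 * t + 1 := by linarith
  have hM : 0 < 3 * t + 2 := by linarith
  set x := t * π / (3 * t + 2) with hx
  set y := t * π / (3 * t + 1) with hy
  have hxy : x ≤ y := div_le_div_of_nonneg_left (by positivity) hN (by linarith)
  have hyπ : y ≤ π := by rw [div_le_iff₀ hN]; nlinarith [pi_pos]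
  have hsinx : 0 < sin x :=
    (div_pos (by positivity) hM).trans_le (two_mul_div_le_sin_mul_pi_div ht.le)
  have hsiny : 0 ≤ sin y := sin_nonneg_of_nonneg_of_le_pi (by positivity) hyπ
  have hratio : x * sin y ≤ y * sin x := mul_sin_le_mul_sin (by positivity) hxy hyπ
  rw [vCoeff, div_mul_eq_mul_div, div_le_iff₀ hsinx]
  calc (t + 1) * sin (2 * π / (3 * t + 2)) * sin y
      ≤ (t + 1) * (2 * π / (3 * t + 2)) * sin y := by
        gcongr
        exact sin_le (by positivity)
    _ = 2 * (t + 1) / t * (x * sin y) := by rw [hx]; field_simp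
    _ ≤ 2 * (t + 1) / t * (y * sin x) := by gcongr
    _ = 2 * π * (t + 1) / (3 * t + 1) * sin x := by rw [hy]; field_simp

variable (ht : 3 ≤ t)
include ht

theorem vCoeff_mul_sin_le :
    vCoeff t * sin (t * π / (3 * t + 1)) ≤ 3 * t * sin (π / (3 * t + 1)) := by
  have hN : 0 < 3 * t + 1 := by linarith
  calc vCoeff t * sin (t * π / (3 * t + 1)) ≤ 2 * π * (t + 1) / (3 * t + 1) :=
        vCoeff_mul_sin_le_two_pi_mul (by linarith)
    _ ≤ 8 / 3 * t * π / (3 * t + 1) :=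
        div_le_div_of_nonneg_right (by nlinarith [pi_pos]) hN.le
    _ = 3 * t * (8 / 9 * (π / (3 * t + 1))) := by ring
    _ ≤ 3 * t * sin (π / (3 * t + 1)) := by
        gcongr
        refine eight_ninths_mul_le_sin (by positivity) ?_
        rw [div_le_div_iff₀ hN three_pos]
        nlinarith [pi_lt_d2]

theorem vCoeff_le_three_mul_sin : vCoeff t ≤ 3 * t * sin (2 * π / (3 * t + 1)) := by
  have hN : 0 < 3 * t + 1 := by linarith
  calc vCoeff t ≤ π * (t + 1) / t := vCoeff_le_pi_mul (by linarith)
    _ ≤ 16 / 3 * t * π / (3 * t + 1) := by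
        rw [div_le_div_iff₀ (by linarith) hN]
        nlinarith [mul_nonneg pi_pos.le (by nlinarith : 0 ≤ 7 * t ^ 2 - 12 * t - 3)]
    _ = 3 * t * (8 / 9 * (2 * π / (3 * t + 1))) := by ring
    _ ≤ 3 * t * sin (2 * π / (3 * t + 1)) := by
        gcongr
        refine eight_ninths_mul_le_sin (by positivity) ?_
        rw [div_le_div_iff₀ hN three_pos]
        nlinarith [pi_lt_d2]

end vCoeff

theorem vCoeff_mul_abs_sin_le {T k : ℕ} (hT : 3 ≤ T) (hk0 : 0 < k) (hk : k < 3 * T + 1) :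
    vCoeff T * |sin (T * π * k / (3 * T + 1))| ≤ 3 * T * sin (π * k / (3 * T + 1)) := by
  have hT' : (3 : ℝ) ≤ T := by exact_mod_cast hT
  have hN : (0 : ℝ) < 3 * T + 1 := by positivity
  wlog hhalf : 2 * k ≤ 3 * T + 1 generalizing k
  · have hrefl := this (k := 3 * T + 1 - k) (by omega) (by omega) (by omega)
    have hcast : ((3 * T + 1 - k : ℕ) : ℝ) = 3 * T + 1 - k := by
      rw [Nat.cast_sub hk.le]; push_cast; ring
    have hmul : (T : ℝ) * π * (3 * T + 1 - k) / (3 * T + 1) =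
        T * π - T * π * k / (3 * T + 1) := by
      field_simp
    have hone : π * (3 * T + 1 - k) / (3 * T + 1) = π - π * k / (3 * T + 1) := by
      field_simp
    rwa [hcast, hmul, hone, abs_sin_nat_mul_pi_sub, sin_pi_sub] at hrefl
  obtain rfl | hk2 : k = 1 ∨ 2 ≤ k := by omega
  · have hsin : 0 ≤ sin (T * π / (3 * T + 1)) := by
      refine sin_nonneg_of_nonneg_of_le_pi (by positivity) ?_
      rw [div_le_iff₀ hN]; nlinarith [pi_pos]
    simpa [abs_of_nonneg hsin] using vCoeff_mul_sin_le hT'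
  · have hk2' : (2 : ℝ) ≤ k := by exact_mod_cast hk2
    have hhalf' : 2 * (k : ℝ) ≤ 3 * T + 1 := by exact_mod_cast hhalf
    calc vCoeff T * |sin (T * π * k / (3 * T + 1))| ≤ vCoeff T :=
          mul_le_of_le_one_right (vCoeff_pos (by linarith)).le (abs_sin_le_one _)
      _ ≤ 3 * T * sin (2 * π / (3 * T + 1)) := vCoeff_le_three_mul_sin hT'
      _ ≤ 3 * T * sin (π * k / (3 * T + 1)) := by
          gcongr
          refine sin_le_sin_of_le_of_le_pi_div_two ?_ ?_ ?_
          · linarith [show 0 ≤ 2 * π / (3 * T + 1) by positivity, pi_pos]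
          · rw [div_le_div_iff₀ hN two_pos]; nlinarith [pi_pos]
          · exact div_le_div_of_nonneg_right (by nlinarith [pi_pos]) hN.le

theorem quadratic_case_product (T : ℕ) (hT : 3 ≤ T) (k : ℕ) (hk0 : 0 < k) (hk : k < 3 * T + 1) :
    let vT : ℝ := ((T : ℝ) + 1) * Real.sin (2 * π / (3 * T + 2)) / Real.sin (T * π / (3 * T + 2))
    Real.sin ((T : ℝ) * π * k / (3 * T + 1)) ≠ 0 ∧
      (3 * (T : ℝ) + 1) * Real.sin (π * k / (3 * T + 1)) /
          (vT * |Real.sin ((T : ℝ) * π * k / (3 * T + 1))|) ≥ (3 * (T : ℝ) + 1) / (3 * T) ∧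
      (3 * (T : ℝ) + 1) / (3 * T) > 1 := by
  intro vT
  have hv : vT = vCoeff T := rfl
  have hT' : (3 : ℝ) ≤ T := by exact_mod_cast hT
  have hne : sin (T * π * k / (3 * T + 1)) ≠ 0 := by
    have hcop : T.Coprime (3 * T + 1) :=
      (Nat.coprime_mul_right_add_right T 1 3).mpr T.coprime_one_right
    simpa using sin_nat_mul_pi_mul_div_ne_zero hcop hk0 hk
  refine ⟨hne, ?_, ?_⟩
  · rw [ge_iff_le, hv, div_le_div_iff₀ (by positivity)
      (mul_pos (vCoeff_pos (by linarith)) (abs_pos.mpr hne))]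
    calc (3 * (T : ℝ) + 1) * (vCoeff T * |sin (T * π * k / (3 * T + 1))|)
        ≤ (3 * T + 1) * (3 * T * sin (π * k / (3 * T + 1))) :=
          mul_le_mul_of_nonneg_left (vCoeff_mul_abs_sin_le hT hk0 hk) (by positivity)
      _ = (3 * T + 1) * sin (π * k / (3 * T + 1)) * (3 * T) := by ring
  · rw [gt_iff_lt, one_lt_div (by positivity)]
    linarith
end
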